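/- Let b ∈ ℝ, let R ∈ ℝ^{m×n} have every entry of absolute value at most C, let K := C/(1−β), fix a state x, and for each T ≥ 1 define A_T := {π ∈ Π_MR : V_T(π,R)(x) ≤ b + Kβ^T} and B_T := {π ∈ Π_MR : J_T(π,γ,R)(x) ≤ b · exp(|γ|Kβ^T)}. Then (A_T)_{T≥1} and (B_T)_{T≥1} are non-increasing sequences of nested sets (A_{T+1} ⊆ A_T and B_{T+1} ⊆ B_T for all T), ∩_{T=1}^∞ A_T = {π ∈ Π_MR : V(π,R)(x) ≤ b}, and ∩_{T=1}^∞ B_T = {π ∈ Π_MR : J(π,γ,R)(x) ≤ b}, where J(π,γ,R)(x) := lim_{T'→∞} J_{T'}(π,γ,R)(x) (this limit exists). -/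
import Mathlib


open Finset Filter Matrix

/-- A row-stochastic matrix (decision rule): nonnegative entries, each row sums to 1. -/
def IsStoch (m n : ℕ) (d : Matrix (Fin m) (Fin n) ℝ) : Prop :=
  (∀ s a, 0 ≤ d s a) ∧ ∀ s, ∑ a, d s a = 1

/-- Valid transition probabilities `p s a s' = p(s'|s,a)`. -/
def IsTransKer (m n : ℕ) (p : Fin m → Fin n → Fin m → ℝ) : Prop :=
  (∀ s a s', 0 ≤ p s a s') ∧ ∀ s a, ∑ s', p s a s' = 1

/-- Max absolute entry norm on vectors. -/
noncomputable def vecNorm {m : ℕ} (v : Fin m → ℝ) : ℝ := ⨆ i, |v i|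

/-- Maximum absolute row-sum norm on matrices. -/
noncomputable def rowSumNorm {m n : ℕ} (B : Matrix (Fin m) (Fin n) ℝ) : ℝ :=
  ⨆ i, ∑ j, |B i j|

/-- Max absolute entry norm on matrices. -/
noncomputable def maxNorm {m n : ℕ} (B : Matrix (Fin m) (Fin n) ℝ) : ℝ :=
  ⨆ i, ⨆ j, |B i j|

/-- `(R_d)_s = ∑_a R(s,a) d(a|s)`. -/
noncomputable def Rvec {m n : ℕ} (R d : Matrix (Fin m) (Fin n) ℝ) : Fin m → ℝ :=
  fun s => ∑ a, R s a * d s a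

/-- `(P_d)_{s,s'} = ∑_a p(s'|s,a) d(a|s)`. -/
noncomputable def Pmat {m n : ℕ} (p : Fin m → Fin n → Fin m → ℝ)
    (d : Matrix (Fin m) (Fin n) ℝ) : Matrix (Fin m) (Fin m) ℝ :=
  fun s s' => ∑ a, p s a s' * d s a

/-- `P_0^π = I`, `P_{t+1}^π = P_t^π ⬝ P_{d_t}`. -/
noncomputable def Ppi {m n : ℕ} (p : Fin m → Fin n → Fin m → ℝ)
    (π : ℕ → Matrix (Fin m) (Fin n) ℝ) : ℕ → Matrix (Fin m) (Fin m) ℝ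
  | 0 => 1
  | t + 1 => Ppi p π t * Pmat p (π t)

/-- Finite-horizon standard discounted cost vector `V_T(π,R)`. -/
noncomputable def VT {m n : ℕ} (β : ℝ) (p : Fin m → Fin n → Fin m → ℝ)
    (π : ℕ → Matrix (Fin m) (Fin n) ℝ) (R : Matrix (Fin m) (Fin n) ℝ) (T : ℕ) :
    Fin m → ℝ :=
  fun x => ∑ t ∈ Finset.range T, β ^ t * (Ppi p π t *ᵥ Rvec R (π t)) x

/-- Infinite-horizon standard discounted cost vector `V(π,R)`. -/
noncomputable def Vinf {m n : ℕ} (β : ℝ) (p : Fin m → Fin n → Fin m → ℝ)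
    (π : ℕ → Matrix (Fin m) (Fin n) ℝ) (R : Matrix (Fin m) (Fin n) ℝ) :
    Fin m → ℝ :=
  fun x => ∑' t : ℕ, β ^ t * (Ppi p π t *ᵥ Rvec R (π t)) x

/-- `Qrev β γ p π R T k = Q_{T-1-k}^{T,π,R}`, defined by the backward recursion. -/
noncomputable def Qrev {m n : ℕ} (β γ : ℝ) (p : Fin m → Fin n → Fin m → ℝ)
    (π : ℕ → Matrix (Fin m) (Fin n) ℝ) (R : Matrix (Fin m) (Fin n) ℝ) (T : ℕ) :
    ℕ → Matrix (Fin m) (Fin n) ℝ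
  | 0 => fun s a => Real.exp (γ * β ^ (T - 1) * R s a)
  | k + 1 => fun s a =>
      Real.exp (γ * β ^ (T - 1 - (k + 1)) * R s a) *
        ∑ s', p s a s' * ∑ a', π (T - 1 - k) s' a' * Qrev β γ p π R T k s' a'

/-- `Q_t^{T,π,R}` for `0 ≤ t ≤ T-1`. -/
noncomputable def Qmat {m n : ℕ} (β γ : ℝ) (p : Fin m → Fin n → Fin m → ℝ)
    (π : ℕ → Matrix (Fin m) (Fin n) ℝ) (R : Matrix (Fin m) (Fin n) ℝ) (T t : ℕ) :
    Matrix (Fin m) (Fin n) ℝ :=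
  Qrev β γ p π R T (T - 1 - t)

/-- Finite-horizon risk-sensitive cost vector `J_T(π,γ,R)`. -/
noncomputable def JT {m n : ℕ} (β γ : ℝ) (p : Fin m → Fin n → Fin m → ℝ)
    (π : ℕ → Matrix (Fin m) (Fin n) ℝ) (R : Matrix (Fin m) (Fin n) ℝ) (T : ℕ) :
    Fin m → ℝ :=
  fun s => ∑ a, π 0 s a * Qmat β γ p π R T 0 s a

/-- Infinite-horizon risk-sensitive cost `J(π,γ,R)(x) = lim_{T→∞} J_T(π,γ,R)(x)`. -/
noncomputable def Jinf {m n : ℕ} (β γ : ℝ) (p : Fin m → Fin n → Fin m → ℝ)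
    (π : ℕ → Matrix (Fin m) (Fin n) ℝ) (R : Matrix (Fin m) (Fin n) ℝ) (x : Fin m) : ℝ :=
  limUnder atTop (fun T => JT β γ p π R T x)

/-- The metric `μ(π₁,π₂) = sup_t δ^t ‖d_t − f_t‖_∞` on Markovian randomized policies. -/
noncomputable def policyDist {m n : ℕ} (δ : ℝ)
    (π₁ π₂ : ℕ → Matrix (Fin m) (Fin n) ℝ) : ℝ :=
  ⨆ t : ℕ, δ ^ t * rowSumNorm (π₁ t - π₂ t)

section stmt15_helpers

variable {m n : ℕ} {p : Fin m → Fin n → Fin m → ℝ} {β γ C : ℝ}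
  {π : ℕ → Matrix (Fin m) (Fin n) ℝ} {R : Matrix (Fin m) (Fin n) ℝ}

lemma wsum_le {ι : Type*} [Fintype ι] {w v : ι → ℝ} {c : ℝ} (hw : ∀ i, 0 ≤ w i)
    (hw1 : ∑ i, w i = 1) (hv : ∀ i, v i ≤ c) : ∑ i, w i * v i ≤ c := by
  calc ∑ i, w i * v i ≤ ∑ i, w i * c :=
        Finset.sum_le_sum fun i _ => mul_le_mul_of_nonneg_left (hv i) (hw i)
    _ = c := by rw [← Finset.sum_mul, hw1, one_mul]

lemma le_wsum {ι : Type*} [Fintype ι] {w v : ι → ℝ} {c : ℝ} (hw : ∀ i, 0 ≤ w i)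
    (hw1 : ∑ i, w i = 1) (hv : ∀ i, c ≤ v i) : c ≤ ∑ i, w i * v i := by
  calc c = ∑ i, w i * c := by rw [← Finset.sum_mul, hw1, one_mul]
    _ ≤ ∑ i, w i * v i :=
        Finset.sum_le_sum fun i _ => mul_le_mul_of_nonneg_left (hv i) (hw i)

lemma abs_term_le (hβ : 0 ≤ β) {r : ℝ} (hr : |r| ≤ C) (j : ℕ) :
    |γ * β ^ j * r| ≤ |γ| * C * β ^ j := by
  rw [abs_mul, abs_mul, abs_pow, abs_of_nonneg hβ]
  have h0 : 0 ≤ |γ| * β ^ j := mul_nonneg (abs_nonneg _) (pow_nonneg hβ _)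
  calc |γ| * β ^ j * |r| ≤ |γ| * β ^ j * C := mul_le_mul_of_nonneg_left hr h0
    _ = |γ| * C * β ^ j := by ring

lemma Qrev_succ (T k : ℕ) (s : Fin m) (a : Fin n) :
    Qrev β γ p π R T (k+1) s a = Real.exp (γ * β ^ (T - 1 - (k+1)) * R s a) *
      ∑ s', p s a s' * ∑ a', π (T - 1 - k) s' a' * Qrev β γ p π R T k s' a' := rfl

lemma Qrev_nonneg (hp : IsTransKer m n p) (hπ : ∀ t, IsStoch m n (π t)) (T : ℕ) :
    ∀ k s a, 0 ≤ Qrev β γ p π R T k s a := by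
  intro k
  induction k with
  | zero => intro s a; exact (Real.exp_pos _).le
  | succ k ih =>
    intro s a
    rw [Qrev_succ]
    exact mul_nonneg (Real.exp_pos _).le (Finset.sum_nonneg fun s' _ =>
      mul_nonneg (hp.1 s a s') (Finset.sum_nonneg fun a' _ =>
        mul_nonneg ((hπ _).1 s' a') (ih s' a')))

lemma Qrev_le (hp : IsTransKer m n p) (hπ : ∀ t, IsStoch m n (π t))
    (hβ : 0 ≤ β) (hC : 0 ≤ C) (hR : ∀ s a, |R s a| ≤ C) (T : ℕ) :
    ∀ k s a, Qrev β γ p π R T k s a ≤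
      Real.exp (|γ| * C * ∑ j ∈ Finset.range (k+1), β ^ (T - 1 - j)) := by
  intro k
  induction k with
  | zero =>
    intro s a
    show Real.exp (γ * β ^ (T-1) * R s a) ≤ _
    rw [Finset.sum_range_one]
    exact Real.exp_le_exp.mpr (le_trans (le_abs_self _) (abs_term_le hβ (hR s a) (T-1-0)))
  | succ k ih =>
    intro s a
    rw [Qrev_succ, Finset.sum_range_succ, mul_add, Real.exp_add,
      mul_comm (Real.exp (|γ| * C * ∑ j ∈ Finset.range (k+1), β ^ (T - 1 - j)))]
    have hS0 : 0 ≤ ∑ s', p s a s' * ∑ a', π (T - 1 - k) s' a' * Qrev β γ p π R T k s' a' :=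
      Finset.sum_nonneg fun s' _ => mul_nonneg (hp.1 s a s') (Finset.sum_nonneg fun a' _ =>
        mul_nonneg ((hπ _).1 s' a') (Qrev_nonneg hp hπ T k s' a'))
    refine mul_le_mul ?_ ?_ hS0 (Real.exp_nonneg _)
    · exact Real.exp_le_exp.mpr (le_trans (le_abs_self _) (abs_term_le hβ (hR s a) _))
    · exact wsum_le (hp.1 s a) (hp.2 s a) fun s' =>
        wsum_le ((hπ _).1 s') ((hπ _).2 s') fun a' => ih s' a'

lemma JT_le (hp : IsTransKer m n p) (hπ : ∀ t, IsStoch m n (π t))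
    (hβ0 : 0 ≤ β) (hβ1 : β < 1) (hC : 0 ≤ C) (hR : ∀ s a, |R s a| ≤ C)
    (x : Fin m) (T : ℕ) (hT : 1 ≤ T) :
    JT β γ p π R T x ≤ Real.exp (|γ| * C * (1 - β)⁻¹) := by
  refine wsum_le ((hπ 0).1 x) ((hπ 0).2 x) fun a => ?_
  refine le_trans (Qrev_le hp hπ hβ0 hC hR T (T - 1 - 0) x a) (Real.exp_le_exp.mpr ?_)
  refine mul_le_mul_of_nonneg_left ?_ (mul_nonneg (abs_nonneg _) hC)
  have hT' : T - 1 - 0 + 1 = T := by omega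
  rw [hT', Finset.sum_range_reflect (fun j => β ^ j) T]
  have h1 := Summable.sum_le_tsum (Finset.range T) (fun i _ => pow_nonneg hβ0 i)
    (summable_geometric_of_lt_one hβ0 hβ1)
  rwa [tsum_geometric_of_lt_one hβ0 hβ1] at h1

lemma Qrev_compare (hp : IsTransKer m n p) (hπ : ∀ t, IsStoch m n (π t))
    (hβ0 : 0 ≤ β) (hR : ∀ s a, |R s a| ≤ C) (T : ℕ) (hT : 1 ≤ T) :
    ∀ k, k ≤ T - 1 → ∀ s a,
      Qrev β γ p π R T k s a * Real.exp (-(|γ| * C * β ^ T)) ≤ Qrev β γ p π R (T+1) (k+1) s a ∧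
      Qrev β γ p π R (T+1) (k+1) s a ≤ Qrev β γ p π R T k s a * Real.exp (|γ| * C * β ^ T) := by
  intro k
  induction k with
  | zero =>
    intro _ s a
    have e1 : T + 1 - 1 - (0+1) = T - 1 := by omega
    have e2 : T + 1 - 1 - 0 = T := by omega
    have e3 : T + 1 - 1 = T := by omega
    have hQ : Qrev β γ p π R (T+1) 1 s a = Real.exp (γ * β ^ (T - 1) * R s a) *
        ∑ s', p s a s' * ∑ a', π T s' a' * Real.exp (γ * β ^ T * R s' a') := by
      rw [Qrev_succ, e1, e2]
      congr 1
    have hQ0 : Qrev β γ p π R T 0 s a = Real.exp (γ * β ^ (T - 1) * R s a) := rfl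
    rw [hQ, hQ0]
    constructor
    · refine mul_le_mul_of_nonneg_left ?_ (Real.exp_nonneg _)
      refine le_wsum (hp.1 s a) (hp.2 s a) fun s' => le_wsum ((hπ _).1 s') ((hπ _).2 s')
        fun a' => Real.exp_le_exp.mpr ?_
      have := (abs_le.mp (abs_term_le (γ := γ) hβ0 (hR s' a') T)).1
      linarith
    · refine mul_le_mul_of_nonneg_left ?_ (Real.exp_nonneg _)
      refine wsum_le (hp.1 s a) (hp.2 s a) fun s' => wsum_le ((hπ _).1 s') ((hπ _).2 s')
        fun a' => Real.exp_le_exp.mpr ?_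
      exact (abs_le.mp (abs_term_le (γ := γ) hβ0 (hR s' a') T)).2
  | succ k ih =>
    intro hk s a
    have hk' : k ≤ T - 1 := by omega
    have e1 : T + 1 - 1 - (k+1+1) = T - 1 - (k+1) := by omega
    have e2 : T + 1 - 1 - (k+1) = T - 1 - k := by omega
    rw [Qrev_succ (T := T+1), Qrev_succ (T := T), e1, e2]
    set E := Real.exp (γ * β ^ (T - 1 - (k+1)) * R s a) with hE
    have hE0 : 0 ≤ E := Real.exp_nonneg _
    constructor
    · rw [mul_assoc]
      refine mul_le_mul_of_nonneg_left ?_ hE0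
      rw [Finset.sum_mul]
      refine Finset.sum_le_sum fun s' _ => ?_
      rw [mul_assoc, Finset.sum_mul]
      refine mul_le_mul_of_nonneg_left (Finset.sum_le_sum fun a' _ => ?_) (hp.1 s a s')
      rw [mul_assoc]
      exact mul_le_mul_of_nonneg_left ((ih hk' s' a').1) ((hπ _).1 s' a')
    · rw [mul_assoc]
      refine mul_le_mul_of_nonneg_left ?_ hE0
      rw [Finset.sum_mul]
      refine Finset.sum_le_sum fun s' _ => ?_
      rw [mul_assoc, Finset.sum_mul]
      refine mul_le_mul_of_nonneg_left (Finset.sum_le_sum fun a' _ => ?_) (hp.1 s a s')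
      rw [mul_assoc]
      exact mul_le_mul_of_nonneg_left ((ih hk' s' a').2) ((hπ _).1 s' a')

lemma JT_step (hp : IsTransKer m n p) (hπ : ∀ t, IsStoch m n (π t))
    (hβ0 : 0 ≤ β) (hR : ∀ s a, |R s a| ≤ C) (x : Fin m) (T : ℕ) (hT : 1 ≤ T) :
    JT β γ p π R T x * Real.exp (-(|γ| * C * β ^ T)) ≤ JT β γ p π R (T+1) x ∧
    JT β γ p π R (T+1) x ≤ JT β γ p π R T x * Real.exp (|γ| * C * β ^ T) := by
  have hTT : T + 1 - 1 - 0 = (T - 1) + 1 := by omega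
  unfold JT Qmat
  rw [hTT]
  have hcmp := Qrev_compare (γ := γ) hp hπ hβ0 hR T hT (T - 1) le_rfl
  constructor
  · rw [Finset.sum_mul]
    refine Finset.sum_le_sum fun a _ => ?_
    rw [mul_assoc]
    exact mul_le_mul_of_nonneg_left ((hcmp x a).1) ((hπ 0).1 x a)
  · rw [Finset.sum_mul]
    refine Finset.sum_le_sum fun a _ => ?_
    rw [mul_assoc]
    exact mul_le_mul_of_nonneg_left ((hcmp x a).2) ((hπ 0).1 x a)

lemma JT_nonneg (hp : IsTransKer m n p) (hπ : ∀ t, IsStoch m n (π t)) (x : Fin m) (T : ℕ) :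
    0 ≤ JT β γ p π R T x :=
  Finset.sum_nonneg fun a _ => mul_nonneg ((hπ 0).1 x a) (Qrev_nonneg hp hπ T _ x a)

lemma JT_step_up (hp : IsTransKer m n p) (hπ : ∀ t, IsStoch m n (π t))
    (hβ0 : 0 ≤ β) (hR : ∀ s a, |R s a| ≤ C) (x : Fin m) (T : ℕ) (hT : 1 ≤ T) :
    JT β γ p π R T x ≤ JT β γ p π R (T+1) x * Real.exp (|γ| * C * β ^ T) := by
  have h := (JT_step (γ := γ) hp hπ hβ0 hR x T hT).1
  have h2 := mul_le_mul_of_nonneg_right h (Real.exp_nonneg (|γ| * C * β ^ T))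
  rwa [mul_assoc, ← Real.exp_add, neg_add_cancel, Real.exp_zero, mul_one] at h2

lemma JT_chain (hp : IsTransKer m n p) (hπ : ∀ t, IsStoch m n (π t))
    (hβ0 : 0 ≤ β) (hR : ∀ s a, |R s a| ≤ C) (x : Fin m) (T : ℕ) (hT : 1 ≤ T) :
    ∀ T', T ≤ T' →
      JT β γ p π R T x ≤ JT β γ p π R T' x *
        Real.exp (|γ| * C * ∑ t ∈ Finset.Ico T T', β ^ t) := by
  intro T' hTT'
  induction T', hTT' using Nat.le_induction with
  | base => simp
  | succ T' hTT' ih =>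
    have h1 := JT_step_up (γ := γ) hp hπ hβ0 hR x T' (hT.trans hTT')
    calc JT β γ p π R T x ≤ JT β γ p π R T' x *
          Real.exp (|γ| * C * ∑ t ∈ Finset.Ico T T', β ^ t) := ih
      _ ≤ (JT β γ p π R (T'+1) x * Real.exp (|γ| * C * β ^ T')) *
          Real.exp (|γ| * C * ∑ t ∈ Finset.Ico T T', β ^ t) :=
          mul_le_mul_of_nonneg_right h1 (Real.exp_nonneg _)
      _ = JT β γ p π R (T'+1) x *
          Real.exp (|γ| * C * ∑ t ∈ Finset.Ico T (T'+1), β ^ t) := by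
          rw [mul_assoc, ← Real.exp_add, Finset.sum_Ico_succ_top hTT', mul_add]
          congr 2
          ring

lemma geom_Ico_le (hβ0 : 0 ≤ β) (hβ1 : β < 1) (T T' : ℕ) :
    ∑ t ∈ Finset.Ico T T', β ^ t ≤ β ^ T * (1 - β)⁻¹ := by
  have hs : Summable (fun i : ℕ => β ^ (T + i)) := by
    simpa [pow_add] using (summable_geometric_of_lt_one hβ0 hβ1).mul_left (β ^ T)
  calc ∑ t ∈ Finset.Ico T T', β ^ t = ∑ i ∈ Finset.range (T' - T), β ^ (T + i) :=
        Finset.sum_Ico_eq_sum_range (fun t => β ^ t) T T'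
    _ ≤ ∑' i : ℕ, β ^ (T + i) :=
        Summable.sum_le_tsum _ (fun i _ => pow_nonneg hβ0 _) hs
    _ = β ^ T * (1 - β)⁻¹ := by
        simp [pow_add, tsum_mul_left, tsum_geometric_of_lt_one hβ0 hβ1]

end stmt15_helpers

section stmt15_helpers2

variable {m n : ℕ} {p : Fin m → Fin n → Fin m → ℝ} {β γ C : ℝ}
  {π : ℕ → Matrix (Fin m) (Fin n) ℝ} {R d : Matrix (Fin m) (Fin n) ℝ}

lemma Pmat_stoch (hp : IsTransKer m n p) (hd : IsStoch m n d) :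
    (∀ s s', 0 ≤ Pmat p d s s') ∧ ∀ s, ∑ s', Pmat p d s s' = 1 := by
  constructor
  · intro s s'
    exact Finset.sum_nonneg fun a _ => mul_nonneg (hp.1 s a s') (hd.1 s a)
  · intro s
    show ∑ s', ∑ a, p s a s' * d s a = 1
    rw [Finset.sum_comm]
    calc ∑ a, ∑ s', p s a s' * d s a = ∑ a, (∑ s', p s a s') * d s a := by
          refine Finset.sum_congr rfl fun a _ => ?_
          rw [Finset.sum_mul]
      _ = 1 := by simp only [hp.2, one_mul]; exact hd.2 s

lemma Ppi_stoch (hp : IsTransKer m n p) (hπ : ∀ t, IsStoch m n (π t)) :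
    ∀ t, (∀ s s', 0 ≤ Ppi p π t s s') ∧ ∀ s, ∑ s', Ppi p π t s s' = 1 := by
  intro t
  induction t with
  | zero =>
    constructor
    · intro s s'
      rw [show Ppi p π 0 = 1 from rfl, Matrix.one_apply]
      split <;> norm_num
    · intro s
      simp [show Ppi p π 0 = 1 from rfl, Matrix.one_apply]
  | succ t ih =>
    have hP := Pmat_stoch (d := π t) hp (hπ t)
    constructor
    · intro s s'
      rw [show Ppi p π (t+1) = Ppi p π t * Pmat p (π t) from rfl, Matrix.mul_apply]
      exact Finset.sum_nonneg fun k _ => mul_nonneg (ih.1 s k) (hP.1 k s')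
    · intro s
      rw [show Ppi p π (t+1) = Ppi p π t * Pmat p (π t) from rfl]
      simp only [Matrix.mul_apply]
      rw [Finset.sum_comm]
      calc ∑ k, ∑ s', Ppi p π t s k * Pmat p (π t) k s'
          = ∑ k, Ppi p π t s k * ∑ s', Pmat p (π t) k s' := by
            refine Finset.sum_congr rfl fun k _ => ?_
            rw [Finset.mul_sum]
        _ = 1 := by simp only [hP.2, mul_one]; exact ih.2 s

lemma Rvec_bound (hR : ∀ s a, |R s a| ≤ C) (hd : IsStoch m n d) (s : Fin m) :
    |Rvec R d s| ≤ C := by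
  refine le_trans (Finset.abs_sum_le_sum_abs _ _) ?_
  calc ∑ a, |R s a * d s a| = ∑ a, d s a * |R s a| := by
        refine Finset.sum_congr rfl fun a _ => ?_
        rw [abs_mul, abs_of_nonneg (hd.1 s a)]; ring
    _ ≤ C := wsum_le (hd.1 s) (hd.2 s) fun a => hR s a

lemma Vterm_bound (hp : IsTransKer m n p) (hπ : ∀ t, IsStoch m n (π t))
    (hR : ∀ s a, |R s a| ≤ C) (t : ℕ) (x : Fin m) :
    |(Ppi p π t *ᵥ Rvec R (π t)) x| ≤ C := by
  have hPs := Ppi_stoch hp hπ t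
  show |∑ s', Ppi p π t x s' * Rvec R (π t) s'| ≤ C
  refine le_trans (Finset.abs_sum_le_sum_abs _ _) ?_
  calc ∑ s', |Ppi p π t x s' * Rvec R (π t) s'|
      = ∑ s', Ppi p π t x s' * |Rvec R (π t) s'| := by
        refine Finset.sum_congr rfl fun s' _ => ?_
        rw [abs_mul, abs_of_nonneg (hPs.1 x s')]
    _ ≤ C := wsum_le (hPs.1 x) (hPs.2 x) fun s' => Rvec_bound hR (hπ t) s'

lemma JT_tendsto (hp : IsTransKer m n p) (hπ : ∀ t, IsStoch m n (π t))
    (hβ0 : 0 < β) (hβ1 : β < 1) (hC : 0 ≤ C) (hR : ∀ s a, |R s a| ≤ C) (x : Fin m) :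
    Filter.Tendsto (fun T => JT β γ p π R T x) Filter.atTop (nhds (Jinf β γ p π R x)) := by
  have hc : 0 ≤ |γ| * C := mul_nonneg (abs_nonneg _) hC
  set M := Real.exp (|γ| * C * (1 - β)⁻¹) with hM
  have hM0 : (0:ℝ) < M := Real.exp_pos _
  have hcau : CauchySeq (fun T => JT β γ p π R T x) := by
    apply cauchySeq_of_dist_le_of_summable
      (fun T => (M * (|γ| * C * Real.exp (|γ| * C))) * β ^ T)
    · intro T
      rcases Nat.eq_zero_or_pos T with h0 | hT
      · subst h0
        have h01 : JT β γ p π R 0 x = JT β γ p π R 1 x := rfl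
        show dist (JT β γ p π R 0 x) (JT β γ p π R 1 x) ≤ _
        rw [h01, dist_self]
        positivity
      · have hG0 : 0 ≤ |γ| * C * β ^ T := mul_nonneg hc (pow_nonneg hβ0.le T)
        have hGle : |γ| * C * β ^ T ≤ |γ| * C := by
          calc |γ| * C * β ^ T ≤ |γ| * C * 1 :=
                mul_le_mul_of_nonneg_left (pow_le_one₀ hβ0.le hβ1.le) hc
            _ = |γ| * C := mul_one _
        have hstep := JT_step (γ := γ) hp hπ hβ0.le hR x T hT
        have hMle := JT_le (γ := γ) hp hπ hβ0.le hβ1 hC hR x T hT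
        have hJ0 := JT_nonneg (γ := γ) (β := β) (R := R) hp hπ x T
        have he1 : Real.exp (|γ| * C * β ^ T) - 1 ≤
            (|γ| * C * β ^ T) * Real.exp (|γ| * C * β ^ T) := by
          have h1 : (-(|γ| * C * β ^ T) + 1) * Real.exp (|γ| * C * β ^ T) ≤
              Real.exp (-(|γ| * C * β ^ T)) * Real.exp (|γ| * C * β ^ T) :=
            mul_le_mul_of_nonneg_right (Real.add_one_le_exp _) (Real.exp_pos _).le
          rw [← Real.exp_add, neg_add_cancel, Real.exp_zero] at h1
          nlinarith [h1]
        have h1e : 1 - Real.exp (-(|γ| * C * β ^ T)) ≤ |γ| * C * β ^ T := by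
          have := Real.add_one_le_exp (-(|γ| * C * β ^ T)); linarith
        have hgeg : Real.exp (|γ| * C * β ^ T) ≤ Real.exp (|γ| * C) := Real.exp_le_exp.mpr hGle
        have hone : (1:ℝ) ≤ Real.exp (|γ| * C) := Real.one_le_exp hc
        have hexpng : Real.exp (-(|γ| * C * β ^ T)) ≤ 1 :=
          Real.exp_le_one_iff.mpr (by linarith)
        show dist (JT β γ p π R T x) (JT β γ p π R (T+1) x) ≤
          (M * (|γ| * C * Real.exp (|γ| * C))) * β ^ T
        have hd : (M * (|γ| * C * Real.exp (|γ| * C))) * β ^ T =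
            M * ((|γ| * C * β ^ T) * Real.exp (|γ| * C)) := by ring
        rw [Real.dist_eq, abs_sub_le_iff, hd]
        constructor
        · have step1a : JT β γ p π R T x - JT β γ p π R (T+1) x ≤
              M * (1 - Real.exp (-(|γ| * C * β ^ T))) := by
            nlinarith [hstep.1, mul_nonneg (sub_nonneg.mpr hMle) (sub_nonneg.mpr hexpng)]
          have step1b : M * (1 - Real.exp (-(|γ| * C * β ^ T))) ≤
              M * ((|γ| * C * β ^ T) * Real.exp (|γ| * C)) := by
            refine mul_le_mul_of_nonneg_left ?_ hM0.le
            nlinarith [h1e, mul_le_mul_of_nonneg_left hone hG0]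
          linarith
        · have step2a : JT β γ p π R (T+1) x - JT β γ p π R T x ≤
              M * (Real.exp (|γ| * C * β ^ T) - 1) := by
            nlinarith [hstep.2, mul_nonneg (sub_nonneg.mpr hMle)
              (sub_nonneg.mpr (Real.one_le_exp hG0))]
          have step2b : M * (Real.exp (|γ| * C * β ^ T) - 1) ≤
              M * ((|γ| * C * β ^ T) * Real.exp (|γ| * C)) := by
            refine mul_le_mul_of_nonneg_left ?_ hM0.le
            nlinarith [he1, mul_le_mul_of_nonneg_left hgeg hG0]
          linarith
    · exact (summable_geometric_of_lt_one hβ0.le hβ1).mul_left _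
  obtain ⟨L, hL⟩ := cauchySeq_tendsto_of_complete hcau
  have hJL : Jinf β γ p π R x = L := hL.limUnder_eq
  rw [hJL]
  exact hL

end stmt15_helpers2

/-- the truncated-from-above constraint sets
`A_T = {π : V_T(π,R)(x) ≤ b + Kβ^T}` and `B_T = {π : J_T(π,γ,R)(x) ≤ b·exp(|γ|Kβ^T)}` are
non-increasing in `T`, with `∩_T A_T = {π : V(π,R)(x) ≤ b}` and
`∩_T B_T = {π : J(π,γ,R)(x) ≤ b}` (where `J` is the limit of the `J_T`, which exists). -/
theorem stmt_15 (m n : ℕ) (hm : 1 ≤ m) (hn : 1 ≤ n)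
    (p : Fin m → Fin n → Fin m → ℝ) (hp : IsTransKer m n p)
    (β : ℝ) (hβ0 : 0 < β) (hβ1 : β < 1)
    (γ : ℝ) (hγ : γ ≠ 0)
    (C : ℝ) (hC : 0 < C)
    (R : Matrix (Fin m) (Fin n) ℝ) (hR : ∀ s a, |R s a| ≤ C)
    (b : ℝ) (x : Fin m) :
    (∀ π : ℕ → Matrix (Fin m) (Fin n) ℝ, (∀ t, IsStoch m n (π t)) →
      Filter.Tendsto (fun T => JT β γ p π R T x) Filter.atTop (nhds (Jinf β γ p π R x))) ∧
    (∀ T : ℕ, 1 ≤ T → ∀ π : ℕ → Matrix (Fin m) (Fin n) ℝ, (∀ t, IsStoch m n (π t)) →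
      (VT β p π R (T + 1) x ≤ b + C / (1 - β) * β ^ (T + 1) →
        VT β p π R T x ≤ b + C / (1 - β) * β ^ T) ∧
      (JT β γ p π R (T + 1) x ≤ b * Real.exp (|γ| * (C / (1 - β)) * β ^ (T + 1)) →
        JT β γ p π R T x ≤ b * Real.exp (|γ| * (C / (1 - β)) * β ^ T))) ∧
    ∀ π : ℕ → Matrix (Fin m) (Fin n) ℝ, (∀ t, IsStoch m n (π t)) →
      ((∀ T : ℕ, 1 ≤ T → VT β p π R T x ≤ b + C / (1 - β) * β ^ T) ↔
        Vinf β p π R x ≤ b) ∧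
      ((∀ T : ℕ, 1 ≤ T → JT β γ p π R T x ≤ b * Real.exp (|γ| * (C / (1 - β)) * β ^ T)) ↔
        Jinf β γ p π R x ≤ b) := by
  have hβ0' : (0:ℝ) ≤ β := hβ0.le
  have h1β : (0:ℝ) < 1 - β := by linarith
  have hβne : (1:ℝ) - β ≠ 0 := ne_of_gt h1β
  refine ⟨?_, ?_, ?_⟩
  · intro π hπ
    exact JT_tendsto hp hπ hβ0 hβ1 hC.le hR x
  · intro T hT π hπ
    constructor
    · intro h
      have hsum : VT β p π R (T+1) x = VT β p π R T x +
          β ^ T * (Ppi p π T *ᵥ Rvec R (π T)) x := Finset.sum_range_succ _ T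
      have hb2 := Vterm_bound hp hπ hR T x
      have hub : -C ≤ (Ppi p π T *ᵥ Rvec R (π T)) x := (abs_le.mp hb2).1
      have hpow : (0:ℝ) ≤ β ^ T := pow_nonneg hβ0' T
      have hKey : C / (1-β) * β ^ (T+1) + C * β ^ T = C / (1-β) * β ^ T := by
        field_simp
        ring
      have hmul := mul_le_mul_of_nonneg_left hub hpow
      linarith
    · intro h
      have hstep := JT_step_up (γ := γ) hp hπ hβ0' hR x T hT
      have h2 := mul_le_mul_of_nonneg_right h (Real.exp_nonneg (|γ| * C * β ^ T))
      have h3 : b * Real.exp (|γ| * (C/(1-β)) * β ^ (T+1)) * Real.exp (|γ| * C * β ^ T) =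
          b * Real.exp (|γ| * (C/(1-β)) * β ^ T) := by
        rw [mul_assoc, ← Real.exp_add]
        congr 2
        field_simp
        ring
      calc JT β γ p π R T x
          ≤ JT β γ p π R (T+1) x * Real.exp (|γ| * C * β ^ T) := hstep
        _ ≤ b * Real.exp (|γ| * (C/(1-β)) * β ^ (T+1)) * Real.exp (|γ| * C * β ^ T) := h2
        _ = b * Real.exp (|γ| * (C/(1-β)) * β ^ T) := h3
  · intro π hπ
    have hFb : ∀ t, |β ^ t * (Ppi p π t *ᵥ Rvec R (π t)) x| ≤ C * β ^ t := by
      intro t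
      rw [abs_mul, abs_pow, abs_of_nonneg hβ0']
      calc β ^ t * |(Ppi p π t *ᵥ Rvec R (π t)) x| ≤ β ^ t * C :=
            mul_le_mul_of_nonneg_left (Vterm_bound hp hπ hR t x) (pow_nonneg hβ0' t)
        _ = C * β ^ t := mul_comm _ _
    have hgeom : Summable (fun t : ℕ => C * β ^ t) :=
      (summable_geometric_of_lt_one hβ0' hβ1).mul_left C
    have hFsum : Summable (fun t : ℕ => β ^ t * (Ppi p π t *ᵥ Rvec R (π t)) x) :=
      Summable.of_abs (hgeom.of_nonneg_of_le (fun t => abs_nonneg _) hFb)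
    have hVt : Filter.Tendsto (fun T => VT β p π R T x) Filter.atTop
        (nhds (Vinf β p π R x)) := hFsum.hasSum.tendsto_sum_nat
    have htail : ∀ T : ℕ, VT β p π R T x ≤ Vinf β p π R x + C/(1-β) * β ^ T := by
      intro T
      have hsplit := Summable.sum_add_tsum_nat_add T hFsum
      have hs2 : Summable (fun i : ℕ => C * β ^ (i + T)) := by
        have : ∀ i : ℕ, C * β ^ (i + T) = (C * β ^ T) * β ^ i := by
          intro i; rw [pow_add]; ring
        rw [funext this]
        exact (summable_geometric_of_lt_one hβ0' hβ1).mul_left _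
      have hs1 : Summable (fun i : ℕ => |β ^ (i+T) * (Ppi p π (i+T) *ᵥ Rvec R (π (i+T))) x|) :=
        hs2.of_nonneg_of_le (fun i => abs_nonneg _) (fun i => hFb (i+T))
      have htb : |∑' i : ℕ, β ^ (i+T) * (Ppi p π (i+T) *ᵥ Rvec R (π (i+T))) x|
          ≤ C/(1-β) * β ^ T := by
        calc |∑' i : ℕ, β ^ (i+T) * (Ppi p π (i+T) *ᵥ Rvec R (π (i+T))) x|
            ≤ ∑' i : ℕ, |β ^ (i+T) * (Ppi p π (i+T) *ᵥ Rvec R (π (i+T))) x| := by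
              have hs1' : Summable (fun i : ℕ =>
                  ‖β ^ (i+T) * (Ppi p π (i+T) *ᵥ Rvec R (π (i+T))) x‖) := by
                simpa only [Real.norm_eq_abs] using hs1
              simpa only [Real.norm_eq_abs] using norm_tsum_le_tsum_norm hs1'
          _ ≤ ∑' i : ℕ, C * β ^ (i + T) := Summable.tsum_le_tsum (fun i => hFb (i+T)) hs1 hs2
          _ = C/(1-β) * β ^ T := by
              have he : ∀ i : ℕ, C * β ^ (i + T) = (C * β ^ T) * β ^ i := by
                intro i; rw [pow_add]; ring
              rw [tsum_congr he, tsum_mul_left, tsum_geometric_of_lt_one hβ0' hβ1]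
              rw [div_eq_mul_inv]; ring
      have hlow := (abs_le.mp htb).1
      have hVTeq : VT β p π R T x =
          ∑ t ∈ Finset.range T, β ^ t * (Ppi p π t *ᵥ Rvec R (π t)) x := rfl
      have hVieq : Vinf β p π R x =
          ∑' t : ℕ, β ^ t * (Ppi p π t *ᵥ Rvec R (π t)) x := rfl
      rw [hVTeq, hVieq]
      linarith
    refine ⟨⟨?_, ?_⟩, ?_, ?_⟩
    · intro h
      refine le_of_tendsto_of_tendsto (g := fun T : ℕ => b + C/(1-β) * β ^ T) hVt ?_ ?_
      · have : Filter.Tendsto (fun T : ℕ => b + C/(1-β) * β ^ T) Filter.atTop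
            (nhds (b + C/(1-β) * 0)) :=
          tendsto_const_nhds.add
            ((tendsto_pow_atTop_nhds_zero_of_lt_one hβ0' hβ1).const_mul _)
        simpa using this
      · filter_upwards [eventually_ge_atTop 1] with T hT using h T hT
    · intro h T hT
      have := htail T
      linarith
    · intro h
      have hJt := JT_tendsto (γ := γ) hp hπ hβ0 hβ1 hC.le hR x
      refine le_of_tendsto_of_tendsto (g := fun T : ℕ => b * Real.exp (|γ| * (C/(1-β)) * β ^ T)) hJt ?_ ?_
      · have h0 : Filter.Tendsto (fun T : ℕ => |γ| * (C/(1-β)) * β ^ T) Filter.atTop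
            (nhds (|γ| * (C/(1-β)) * 0)) :=
          (tendsto_pow_atTop_nhds_zero_of_lt_one hβ0' hβ1).const_mul _
        have h0' : Filter.Tendsto (fun T : ℕ => |γ| * (C/(1-β)) * β ^ T) Filter.atTop
            (nhds 0) := by simpa using h0
        have h1 : Filter.Tendsto (fun T : ℕ => Real.exp (|γ| * (C/(1-β)) * β ^ T))
            Filter.atTop (nhds (Real.exp 0)) := (Real.continuous_exp.tendsto 0).comp h0'
        have h2 := h1.const_mul b
        simpa using h2
      · filter_upwards [eventually_ge_atTop 1] with T hT using h T hT
    · intro h T hT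
      have hJt := JT_tendsto (γ := γ) hp hπ hβ0 hβ1 hC.le hR x
      have hkey : ∀ T', T ≤ T' → JT β γ p π R T x ≤
          JT β γ p π R T' x * Real.exp (|γ| * (C/(1-β)) * β ^ T) := by
        intro T' hT'
        refine (JT_chain (γ := γ) hp hπ hβ0' hR x T hT T' hT').trans ?_
        refine mul_le_mul_of_nonneg_left ?_ (JT_nonneg (γ := γ) (β := β) (R := R) hp hπ x T')
        refine Real.exp_le_exp.mpr ?_
        have hI := geom_Ico_le (β := β) hβ0' hβ1 T T'
        have hc0 : 0 ≤ |γ| * C := mul_nonneg (abs_nonneg _) hC.le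
        calc |γ| * C * ∑ t ∈ Finset.Ico T T', β ^ t
            ≤ |γ| * C * (β ^ T * (1-β)⁻¹) := mul_le_mul_of_nonneg_left hI hc0
          _ = |γ| * (C/(1-β)) * β ^ T := by rw [div_eq_mul_inv]; ring
      have hlim : Filter.Tendsto
          (fun T' => JT β γ p π R T' x * Real.exp (|γ| * (C/(1-β)) * β ^ T))
          Filter.atTop (nhds (Jinf β γ p π R x * Real.exp (|γ| * (C/(1-β)) * β ^ T))) :=
        hJt.mul_const _
      have hle : JT β γ p π R T x ≤
          Jinf β γ p π R x * Real.exp (|γ| * (C/(1-β)) * β ^ T) :=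
        ge_of_tendsto hlim (by filter_upwards [eventually_ge_atTop T] with T' h' using hkey T' h')
      exact hle.trans (mul_le_mul_of_nonneg_right h (Real.exp_nonneg _))
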